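/- Let H be a finite set with a fixed-point-free involution α and a permutation σ, such that the group generated by σ and α acts transitively on H. Let V be the number of cycles of σ, E = |H|/2 the number of cycles of α, and F the number of cycles of σ∘α. Then V - E + F ≤ 2, and V - E + F is even. -/

import Mathlib

open Equiv

/-- The total number of cycles (orbits, including fixed points) of a permutation of a
finite type: the nontrivial cycles counted by `cycleType` together with the fixed
points. -/
def cycleCount {H : Type*} [Fintype H] [DecidableEq H] (σ : Equiv.Perm H) : ℕ :=
  Multiset.card σ.cycleType + (Finset.univ.filter fun x => σ x = x).card

set_option linter.unusedSectionVars false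

namespace RibbonAux

open Subgroup Equiv.Perm

variable {H : Type*} [Fintype H] [DecidableEq H]

/-- The orbit equivalence relation of the subgroup generated by a set of permutations. -/
def orbSetoid (S : Set (Equiv.Perm H)) : Setoid H where
  r z w := ∃ g ∈ Subgroup.closure S, g z = w
  iseqv := by
    refine ⟨fun z => ⟨1, one_mem _, rfl⟩, ?_, ?_⟩
    · rintro z w ⟨g, hg, rfl⟩
      exact ⟨g⁻¹, inv_mem hg, g.symm_apply_apply z⟩
    · rintro z w v ⟨g, hg, rfl⟩ ⟨g', hg', rfl⟩
      exact ⟨g' * g, mul_mem hg' hg, rfl⟩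

/-- Number of orbits of the subgroup generated by `S`. -/
noncomputable def orb (S : Set (Equiv.Perm H)) : ℕ :=
  Nat.card (Quotient (orbSetoid S))

lemma orbSetoid_congr {S T : Set (Equiv.Perm H)}
    (h : Subgroup.closure S = Subgroup.closure T) : orbSetoid S = orbSetoid T := by
  apply Setoid.ext
  intro a b
  show (∃ g ∈ Subgroup.closure S, g a = b) ↔ (∃ g ∈ Subgroup.closure T, g a = b)
  rw [h]

lemma orb_congr {S T : Set (Equiv.Perm H)}
    (h : Subgroup.closure S = Subgroup.closure T) : orb S = orb T := by
  unfold orb; rw [orbSetoid_congr h]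

/-- Merge the classes of `x` and `y` in a setoid. -/
def mergeSetoid (s : Setoid H) (x y : H) : Setoid H where
  r z w := s z w ∨ (s z x ∧ s y w) ∨ (s z y ∧ s x w)
  iseqv := by
    constructor
    · intro z; exact Or.inl (s.refl z)
    · rintro z w (h | ⟨h1, h2⟩ | ⟨h1, h2⟩)
      · exact Or.inl (s.symm h)
      · exact Or.inr (Or.inr ⟨s.symm h2, s.symm h1⟩)
      · exact Or.inr (Or.inl ⟨s.symm h2, s.symm h1⟩)
    · rintro z w v (h | ⟨h1, h2⟩ | ⟨h1, h2⟩) (h' | ⟨h1', h2'⟩ | ⟨h1', h2'⟩)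
      · exact Or.inl (s.trans h h')
      · exact Or.inr (Or.inl ⟨s.trans h h1', h2'⟩)
      · exact Or.inr (Or.inr ⟨s.trans h h1', h2'⟩)
      · exact Or.inr (Or.inl ⟨h1, s.trans h2 h'⟩)
      · exact Or.inl (s.trans h1 (s.trans (s.symm (s.trans h2 h1')) h2'))
      · exact Or.inl (s.trans h1 h2')
      · exact Or.inr (Or.inr ⟨h1, s.trans h2 h'⟩)
      · exact Or.inl (s.trans h1 h2')
      · exact Or.inl (s.trans h1 (s.trans (s.symm (s.trans h2 h1')) h2'))

lemma mergeSetoid_eq_self {s : Setoid H} {x y : H} (hxy : s x y) :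
    mergeSetoid s x y = s := by
  apply Setoid.ext
  intro z w
  constructor
  · rintro (h | ⟨h1, h2⟩ | ⟨h1, h2⟩)
    · exact h
    · exact s.trans h1 (s.trans hxy h2)
    · exact s.trans h1 (s.trans (s.symm hxy) h2)
  · exact fun h => Or.inl h

open scoped Classical in
/-- If `x ≁ y`, merging their classes reduces the number of classes by exactly one. -/
lemma card_quotient_mergeSetoid {s : Setoid H} {x y : H} (hxy : ¬ s x y) :
    Nat.card (Quotient s) = Nat.card (Quotient (mergeSetoid s x y)) + 1 := by
  have := Quotient.finite (mergeSetoid s x y)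
  set m := mergeSetoid s x y with hm
  let f0 : H → (Quotient m) ⊕ Unit := fun z =>
    if s z y then Sum.inr () else Sum.inl (Quotient.mk m z)
  have hwd : ∀ z w : H, s z w → f0 z = f0 w := by
    intro z w h
    by_cases hz : s z y
    · have hw : s w y := s.trans (s.symm h) hz
      simp only [f0, if_pos hz, if_pos hw]
    · have hw : ¬ s w y := fun hw => hz (s.trans h hw)
      simp only [f0, if_neg hz, if_neg hw, Sum.inl.injEq]
      exact Quotient.sound (Or.inl h)
  let f : Quotient s → (Quotient m) ⊕ Unit := Quotient.lift f0 hwd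
  have hf : ∀ z : H, f (Quotient.mk s z) = f0 z := fun z => rfl
  have hinj : Function.Injective f := by
    intro q1 q2
    induction q1 using Quotient.ind
    induction q2 using Quotient.ind
    rename_i z w
    rw [hf, hf]
    by_cases hz : s z y <;> by_cases hw : s w y
    · intro _; exact Quotient.sound (s.trans hz (s.symm hw))
    · simp only [f0, if_pos hz, if_neg hw]; intro h; exact absurd h (by simp)
    · simp only [f0, if_neg hz, if_pos hw]; intro h; exact absurd h (by simp)
    · simp only [f0, if_neg hz, if_neg hw, Sum.inl.injEq]
      intro h
      rcases Quotient.exact h with h' | ⟨h1, h2⟩ | ⟨h1, h2⟩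
      · exact Quotient.sound h'
      · exact absurd (s.symm h2) hw
      · exact absurd h1 hz
  have hsurj : Function.Surjective f := by
    rintro (q | ⟨⟩)
    · induction q using Quotient.ind
      rename_i z
      by_cases hz : s z y
      · refine ⟨Quotient.mk s x, ?_⟩
        rw [hf]
        simp only [f0, if_neg hxy]
        exact congrArg Sum.inl (Quotient.sound (Or.inr (Or.inl ⟨s.refl x, s.symm hz⟩)))
      · exact ⟨Quotient.mk s z, by rw [hf]; simp only [f0, if_neg hz]⟩
    · refine ⟨Quotient.mk s y, ?_⟩
      rw [hf]
      have hry : s y y := s.iseqv.refl y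
      simp only [f0]
      rw [if_pos hry]
  have := Nat.card_congr (Equiv.ofBijective f ⟨hinj, hsurj⟩)
  rw [this, Nat.card_sum]
  simp

/-- Adding the transposition `swap x y` to the generating set merges the orbit
classes of `x` and `y`. -/
lemma orbSetoid_insert_swap (S : Set (Equiv.Perm H)) (x y : H) :
    orbSetoid (insert (Equiv.swap x y) S) = mergeSetoid (orbSetoid S) x y := by
  apply Setoid.ext
  intro z w
  constructor
  · rintro ⟨g, hg, rfl⟩
    revert z
    induction hg using Subgroup.closure_induction with
    | mem g hgS =>
      intro z
      rcases Set.mem_insert_iff.mp hgS with rfl | hgS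
      · rcases eq_or_ne z x with rfl | hzx
        · rw [Equiv.swap_apply_left]
          exact Or.inr (Or.inl ⟨(orbSetoid S).refl _, (orbSetoid S).refl _⟩)
        · rcases eq_or_ne z y with rfl | hzy
          · rw [Equiv.swap_apply_right]
            exact Or.inr (Or.inr ⟨(orbSetoid S).refl _, (orbSetoid S).refl _⟩)
          · rw [Equiv.swap_apply_of_ne_of_ne hzx hzy]
      · exact Or.inl ⟨g, Subgroup.subset_closure hgS, rfl⟩
    | one =>
      intro z
      exact Or.inl ((orbSetoid S).refl _)
    | mul g h hgmem hhmem hg hh =>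
      intro z
      exact (mergeSetoid (orbSetoid S) x y).trans (hh z) (hg (h z))
    | inv g hgmem hg =>
      intro z
      have := (mergeSetoid (orbSetoid S) x y).symm (hg (g⁻¹ z))
      simpa using this
  · have hmem : Equiv.swap x y ∈ Subgroup.closure (insert (Equiv.swap x y) S) :=
      Subgroup.subset_closure (Set.mem_insert _ _)
    have hmono : ∀ g : Equiv.Perm H, g ∈ Subgroup.closure S →
        g ∈ Subgroup.closure (insert (Equiv.swap x y) S) :=
      fun g hg => Subgroup.closure_mono (Set.subset_insert _ _) hg
    rintro (⟨g, hg, rfl⟩ | ⟨⟨g1, hg1, hg1e⟩, ⟨g2, hg2, hg2e⟩⟩ |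
      ⟨⟨g1, hg1, hg1e⟩, ⟨g2, hg2, hg2e⟩⟩)
    · exact ⟨g, hmono g hg, rfl⟩
    · refine ⟨g2 * Equiv.swap x y * g1, mul_mem (mul_mem (hmono g2 hg2) hmem) (hmono g1 hg1), ?_⟩
      simp [hg1e, Equiv.swap_apply_left, hg2e]
    · refine ⟨g2 * Equiv.swap x y * g1, mul_mem (mul_mem (hmono g2 hg2) hmem) (hmono g1 hg1), ?_⟩
      simp [hg1e, Equiv.swap_apply_right, hg2e]


lemma card_quotient_le (s : Setoid H) : Nat.card (Quotient s) ≤ Fintype.card H := by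
  rw [← Nat.card_eq_fintype_card]
  exact Nat.card_le_card_of_surjective (Quotient.mk s)
    (fun q => ⟨q.out, Quotient.out_eq q⟩)

lemma orbSetoid_singleton_rel (π : Equiv.Perm H) (z w : H) :
    (orbSetoid {π}) z w ↔ π.SameCycle z w := by
  constructor
  · rintro ⟨g, hg, rfl⟩
    obtain ⟨n, rfl⟩ := Subgroup.mem_closure_singleton.mp hg
    exact ⟨n, rfl⟩
  · rintro ⟨n, rfl⟩
    exact ⟨π ^ n, Subgroup.mem_closure_singleton.mpr ⟨n, rfl⟩, rfl⟩

lemma card_cycleType_eq (π : Equiv.Perm H) :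
    Multiset.card π.cycleType = π.cycleFactorsFinset.card := by
  unfold Equiv.Perm.cycleType; simp

open scoped Classical in
/-- The number of cycles of `π` equals the number of orbits of `⟨π⟩`. -/
lemma cycleCount_eq_orb (π : Equiv.Perm H) : cycleCount π = orb {π} := by
  classical
  set s := orbSetoid ({π} : Set (Equiv.Perm H)) with hs
  have hrel : ∀ z w : H, s z w ↔ π.SameCycle z w := orbSetoid_singleton_rel π
  let T := {c // c ∈ π.cycleFactorsFinset} ⊕ {x : H // π x = x}
  let f0 : H → T := fun z =>
    if h : π z = z then Sum.inr ⟨z, h⟩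
    else Sum.inl ⟨π.cycleOf z,
      Equiv.Perm.cycleOf_mem_cycleFactorsFinset_iff.mpr (Equiv.Perm.mem_support.mpr h)⟩
  have fixed_of : ∀ z w : H, π.SameCycle z w → π z = z → w = z := by
    rintro z w ⟨n, rfl⟩ hz
    exact Equiv.Perm.zpow_apply_eq_self_of_apply_eq_self hz n
  have hwd : ∀ z w : H, s z w → f0 z = f0 w := by
    intro z w h
    rw [hrel] at h
    by_cases hz : π z = z
    · have : w = z := fixed_of z w h hz
      subst this; rfl
    · have hw : ¬ π w = w := by
        intro hw
        exact hz ((fixed_of w z h.symm hw) ▸ hw)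
      simp only [f0, dif_neg hz, dif_neg hw]
      exact congrArg Sum.inl (Subtype.ext h.cycleOf_eq)
  let f : Quotient s → T := Quotient.lift f0 hwd
  have hf : ∀ z : H, f (Quotient.mk s z) = f0 z := fun _ => rfl
  have hinj : Function.Injective f := by
    intro q1 q2
    induction q1 using Quotient.ind
    induction q2 using Quotient.ind
    rename_i z w
    rw [hf, hf]
    by_cases hz : π z = z <;> by_cases hw : π w = w
    · simp only [f0, dif_pos hz, dif_pos hw]
      intro h
      rw [Sum.inr.injEq, Subtype.mk.injEq] at h
      exact Quotient.sound (h ▸ s.iseqv.refl z)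
    · simp only [f0, dif_pos hz, dif_neg hw]
      intro h; exact absurd h (by simp)
    · simp only [f0, dif_neg hz, dif_pos hw]
      intro h; exact absurd h (by simp)
    · simp only [f0, dif_neg hz, dif_neg hw]
      intro h
      rw [Sum.inl.injEq, Subtype.mk.injEq] at h
      refine Quotient.sound ((hrel z w).mpr ?_)
      by_contra hnc
      have := Equiv.Perm.cycleOf_apply_of_not_sameCycle hnc
      rw [h, Equiv.Perm.cycleOf_apply_self] at this
      exact hw this
  have hsurj : Function.Surjective f := by
    rintro (⟨c, hc⟩ | ⟨z, hz⟩)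
    · obtain ⟨hcyc, hfac⟩ := Equiv.Perm.mem_cycleFactorsFinset_iff.mp hc
      obtain ⟨z, hz, -⟩ := hcyc
      have hzs : z ∈ c.support := Equiv.Perm.mem_support.mpr hz
      have hzc : c = π.cycleOf z := Equiv.Perm.cycle_is_cycleOf hzs hc
      have hπz : ¬ π z = z := by
        intro h
        exact hz (((hfac z hzs).trans h))
      refine ⟨Quotient.mk s z, ?_⟩
      rw [hf]
      simp only [f0, dif_neg hπz]
      exact congrArg Sum.inl (Subtype.ext hzc.symm)
    · exact ⟨Quotient.mk s z, by rw [hf]; simp only [f0, dif_pos hz]⟩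
  have hcard := Nat.card_congr (Equiv.ofBijective f ⟨hinj, hsurj⟩)
  show cycleCount π = Nat.card (Quotient s)
  rw [hcard]
  show cycleCount π = Nat.card T
  rw [Nat.card_sum, Nat.card_eq_fintype_card, Nat.card_eq_fintype_card,
    Fintype.card_coe, Fintype.card_subtype, cycleCount, card_cycleType_eq]

/-- Parity: `c(a) + c(b) + c(ab) ≡ |H| (mod 2)`, via the sign homomorphism. -/
lemma cycleCount_parity (a b : Equiv.Perm H) :
    (cycleCount a + cycleCount b + cycleCount (a * b) + Fintype.card H) % 2 = 0 := by
  have hsign := Equiv.Perm.sign_mul a b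
  rw [Equiv.Perm.sign_of_cycleType a, Equiv.Perm.sign_of_cycleType b,
    Equiv.Perm.sign_of_cycleType (a * b)] at hsign
  set ka := Multiset.card a.cycleType
  set kb := Multiset.card b.cycleType
  set kc := Multiset.card (a * b).cycleType
  set sa := a.cycleType.sum
  set sb := b.cycleType.sum
  set sc := (a * b).cycleType.sum
  have hz : ((-1 : ℤ)) ^ ((sc + kc) + ((sa + ka) + (sb + kb))) = 1 := by
    have : ((-1 : ℤˣ)) ^ (sc + kc) = (-1) ^ ((sa + ka) + (sb + kb)) := by
      rw [hsign]; exact (pow_add _ _ _).symm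
    have h2 : ((-1 : ℤ)) ^ (sc + kc) = (-1) ^ ((sa + ka) + (sb + kb)) := by
      have := congrArg (Units.val) this
      simpa using this
    rw [pow_add, h2, ← pow_add, ← two_mul, pow_mul]
    norm_num
  have heven : Even ((sc + kc) + ((sa + ka) + (sb + kb))) :=
    (neg_one_pow_eq_one_iff_even (by norm_num)).mp hz
  rw [Nat.even_iff] at heven
  have hca : cycleCount a + a.support.card = ka + Fintype.card H := by
    have h1 : (Finset.univ.filter fun x => a x = x).card + a.support.card
        = Fintype.card H := by
      rw [Equiv.Perm.support]
      exact Finset.card_filter_add_card_filter_not _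
    rw [cycleCount]; omega
  have hcb : cycleCount b + b.support.card = kb + Fintype.card H := by
    have h1 : (Finset.univ.filter fun x => b x = x).card + b.support.card
        = Fintype.card H := by
      rw [Equiv.Perm.support]
      exact Finset.card_filter_add_card_filter_not _
    rw [cycleCount]; omega
  have hcc : cycleCount (a * b) + (a * b).support.card = kc + Fintype.card H := by
    have h1 : (Finset.univ.filter fun x => (a * b) x = x).card + (a * b).support.card
        = Fintype.card H := by
      rw [Equiv.Perm.support]
      exact Finset.card_filter_add_card_filter_not _
    rw [cycleCount]; omega
  have hsa : sa = a.support.card := Equiv.Perm.sum_cycleType a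
  have hsb : sb = b.support.card := Equiv.Perm.sum_cycleType b
  have hsc : sc = (a * b).support.card := Equiv.Perm.sum_cycleType (a * b)
  omega

lemma closure_eq_closure {S T : Set (Equiv.Perm H)}
    (h1 : S ⊆ ↑(Subgroup.closure T)) (h2 : T ⊆ ↑(Subgroup.closure S)) :
    Subgroup.closure S = Subgroup.closure T :=
  le_antisymm ((Subgroup.closure_le _).mpr h1) ((Subgroup.closure_le _).mpr h2)


lemma orb_insert_swap_of_rel {S : Set (Equiv.Perm H)} {x y : H}
    (hrel : (orbSetoid S) x y) : orb (insert (Equiv.swap x y) S) = orb S := by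
  unfold orb
  rw [orbSetoid_insert_swap, mergeSetoid_eq_self hrel]

lemma orb_insert_swap_of_not_rel {S : Set (Equiv.Perm H)} {x y : H}
    (hrel : ¬ (orbSetoid S) x y) : orb S = orb (insert (Equiv.swap x y) S) + 1 := by
  unfold orb
  rw [orbSetoid_insert_swap]
  exact card_quotient_mergeSetoid hrel

lemma orb_insert_swap_le (S : Set (Equiv.Perm H)) (x y : H) :
    orb (insert (Equiv.swap x y) S) ≤ orb S := by
  by_cases h : (orbSetoid S) x y
  · rw [orb_insert_swap_of_rel h]
  · rw [orb_insert_swap_of_not_rel h]; omega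

lemma le_orb_insert_swap (S : Set (Equiv.Perm H)) (x y : H) :
    orb S ≤ orb (insert (Equiv.swap x y) S) + 1 := by
  by_cases h : (orbSetoid S) x y
  · rw [orb_insert_swap_of_rel h]; omega
  · rw [orb_insert_swap_of_not_rel h]

lemma cycleCount_one : cycleCount (1 : Equiv.Perm H) = Fintype.card H := by
  simp [cycleCount, Equiv.Perm.cycleType_one]

/-- The key inequality: for any permutations `a, b` of a finite set `H`,
`c(a) + c(b) + c(ab) ≤ |H| + 2·(number of orbits of ⟨a, b⟩)`. -/
lemma key : ∀ k (b a : Equiv.Perm H), Fintype.card H - cycleCount b = k →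
    cycleCount a + cycleCount b + cycleCount (a * b)
      ≤ Fintype.card H + 2 * orb {a, b} := by
  intro k
  induction k using Nat.strong_induction_on with
  | _ k ih =>
  intro b a hmeas
  rcases eq_or_ne b 1 with rfl | hb
  · have h1 : orb ({a, 1} : Set (Equiv.Perm H)) = orb {a} := by
      apply orb_congr
      apply closure_eq_closure
      · intro g hg
        simp only [Set.mem_insert_iff, Set.mem_singleton_iff] at hg
        rcases hg with rfl | rfl
        · exact Subgroup.subset_closure rfl
        · exact one_mem _
      · intro g hg
        simp only [Set.mem_singleton_iff] at hg
        rcases hg with rfl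
        exact Subgroup.subset_closure (Set.mem_insert _ _)
    rw [h1, mul_one, cycleCount_one, ← cycleCount_eq_orb]
    omega
  · obtain ⟨x, hx⟩ : ∃ x, b x ≠ x := by
      by_contra h
      push_neg at h
      exact hb (Equiv.ext h)
    have hττ : Equiv.swap x (b x) * Equiv.swap x (b x) = 1 := Equiv.swap_mul_self _ _
    have hab : (a * Equiv.swap x (b x)) * (Equiv.swap x (b x) * b) = a * b := by
      rw [mul_assoc, ← mul_assoc (Equiv.swap x (b x)) (Equiv.swap x (b x)) b, hττ, one_mul]
    have hb'x : (Equiv.swap x (b x) * b) x = x := by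
      simp [Equiv.Perm.mul_apply, Equiv.swap_apply_right]
    have hfix : ∀ g ∈ Subgroup.closure ({Equiv.swap x (b x) * b} : Set (Equiv.Perm H)),
        g x = x := by
      intro g hg
      induction hg using Subgroup.closure_induction with
      | mem g hgS =>
        rcases Set.mem_singleton_iff.mp hgS with rfl
        exact hb'x
      | one => rfl
      | mul g h _ _ hg hh =>
        show g (h x) = x
        rw [hh, hg]
      | inv g _ hg =>
        have h2 := congrArg (g⁻¹ : Equiv.Perm H) hg
        simpa using h2.symm
    have hnot_b' : ¬ (orbSetoid ({Equiv.swap x (b x) * b} : Set (Equiv.Perm H))) x (b x) := by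
      rintro ⟨g, hg, he⟩
      exact hx (he.symm.trans (hfix g hg))
    have hrel_b : (orbSetoid ({b} : Set (Equiv.Perm H))) x (b x) :=
      ⟨b, Subgroup.subset_closure rfl, rfl⟩
    have hcl_b : Subgroup.closure (insert (Equiv.swap x (b x)) {Equiv.swap x (b x) * b})
        = Subgroup.closure (insert (Equiv.swap x (b x)) ({b} : Set (Equiv.Perm H))) := by
      apply closure_eq_closure
      · rw [Set.insert_subset_iff, Set.singleton_subset_iff]
        refine ⟨Subgroup.subset_closure (Set.mem_insert _ _), ?_⟩
        exact mul_mem (Subgroup.subset_closure (Set.mem_insert _ _))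
          (Subgroup.subset_closure (Set.mem_insert_iff.mpr (Or.inr rfl)))
      · rw [Set.insert_subset_iff, Set.singleton_subset_iff]
        refine ⟨Subgroup.subset_closure (Set.mem_insert _ _), ?_⟩
        have hm : (Equiv.swap x (b x))⁻¹ * (Equiv.swap x (b x) * b) ∈ Subgroup.closure
            (insert (Equiv.swap x (b x)) ({Equiv.swap x (b x) * b} : Set (Equiv.Perm H))) :=
          mul_mem (inv_mem (Subgroup.subset_closure (Set.mem_insert _ _)))
            (Subgroup.subset_closure (Set.mem_insert_iff.mpr (Or.inr rfl)))
        simpa using hm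
    have hcl_a : Subgroup.closure (insert (Equiv.swap x (b x)) {a * Equiv.swap x (b x)})
        = Subgroup.closure (insert (Equiv.swap x (b x)) ({a} : Set (Equiv.Perm H))) := by
      apply closure_eq_closure
      · rw [Set.insert_subset_iff, Set.singleton_subset_iff]
        refine ⟨Subgroup.subset_closure (Set.mem_insert _ _), ?_⟩
        exact mul_mem (Subgroup.subset_closure (Set.mem_insert_iff.mpr (Or.inr rfl)))
          (Subgroup.subset_closure (Set.mem_insert _ _))
      · rw [Set.insert_subset_iff, Set.singleton_subset_iff]
        refine ⟨Subgroup.subset_closure (Set.mem_insert _ _), ?_⟩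
        have hm : (a * Equiv.swap x (b x)) * (Equiv.swap x (b x))⁻¹ ∈ Subgroup.closure
            (insert (Equiv.swap x (b x)) ({a * Equiv.swap x (b x)} : Set (Equiv.Perm H))) :=
          mul_mem (Subgroup.subset_closure (Set.mem_insert_iff.mpr (Or.inr rfl)))
            (inv_mem (Subgroup.subset_closure (Set.mem_insert _ _)))
        simpa using hm
    have hcl_ab : Subgroup.closure
          (insert (Equiv.swap x (b x)) {a * Equiv.swap x (b x), Equiv.swap x (b x) * b})
        = Subgroup.closure (insert (Equiv.swap x (b x)) ({a, b} : Set (Equiv.Perm H))) := by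
      apply closure_eq_closure
      · rw [Set.insert_subset_iff, Set.insert_subset_iff, Set.singleton_subset_iff]
        have hτm : Equiv.swap x (b x) ∈ Subgroup.closure
            (insert (Equiv.swap x (b x)) ({a, b} : Set (Equiv.Perm H))) :=
          Subgroup.subset_closure (Set.mem_insert _ _)
        have ham : a ∈ Subgroup.closure
            (insert (Equiv.swap x (b x)) ({a, b} : Set (Equiv.Perm H))) :=
          Subgroup.subset_closure (Set.mem_insert_iff.mpr (Or.inr (Set.mem_insert _ _)))
        have hbm : b ∈ Subgroup.closure
            (insert (Equiv.swap x (b x)) ({a, b} : Set (Equiv.Perm H))) :=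
          Subgroup.subset_closure
            (Set.mem_insert_iff.mpr (Or.inr (Set.mem_insert_iff.mpr (Or.inr rfl))))
        exact ⟨hτm, mul_mem ham hτm, mul_mem hτm hbm⟩
      · rw [Set.insert_subset_iff, Set.insert_subset_iff, Set.singleton_subset_iff]
        have hτm : Equiv.swap x (b x) ∈ Subgroup.closure
            (insert (Equiv.swap x (b x))
              ({a * Equiv.swap x (b x), Equiv.swap x (b x) * b} : Set (Equiv.Perm H))) :=
          Subgroup.subset_closure (Set.mem_insert _ _)
        have ha'm : a * Equiv.swap x (b x) ∈ Subgroup.closure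
            (insert (Equiv.swap x (b x))
              ({a * Equiv.swap x (b x), Equiv.swap x (b x) * b} : Set (Equiv.Perm H))) :=
          Subgroup.subset_closure (Set.mem_insert_iff.mpr (Or.inr (Set.mem_insert _ _)))
        have hb'm : Equiv.swap x (b x) * b ∈ Subgroup.closure
            (insert (Equiv.swap x (b x))
              ({a * Equiv.swap x (b x), Equiv.swap x (b x) * b} : Set (Equiv.Perm H))) :=
          Subgroup.subset_closure
            (Set.mem_insert_iff.mpr (Or.inr (Set.mem_insert_iff.mpr (Or.inr rfl))))
        refine ⟨hτm, ?_, ?_⟩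
        · have hm := mul_mem ha'm (inv_mem hτm)
          simpa using hm
        · have hm := mul_mem (inv_mem hτm) hb'm
          simpa using hm
    -- cycle count of b' is one more than that of b
    have hbb' : cycleCount (Equiv.swap x (b x) * b) = cycleCount b + 1 := by
      rw [cycleCount_eq_orb, cycleCount_eq_orb,
        orb_insert_swap_of_not_rel hnot_b', orb_congr hcl_b, orb_insert_swap_of_rel hrel_b]
    have hb'le : cycleCount (Equiv.swap x (b x) * b) ≤ Fintype.card H := by
      rw [cycleCount_eq_orb]
      exact card_quotient_le _
    have hblt : cycleCount b < Fintype.card H := by omega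
    have hIH := ih (Fintype.card H - cycleCount (Equiv.swap x (b x) * b))
      (by omega) (Equiv.swap x (b x) * b) (a * Equiv.swap x (b x)) rfl
    rw [hab] at hIH
    have hrel_ab : (orbSetoid ({a, b} : Set (Equiv.Perm H))) x (b x) :=
      ⟨b, Subgroup.subset_closure (Set.mem_insert_iff.mpr (Or.inr rfl)), rfl⟩
    have ht2 : orb (insert (Equiv.swap x (b x))
        ({a * Equiv.swap x (b x), Equiv.swap x (b x) * b} : Set (Equiv.Perm H)))
        = orb ({a, b} : Set (Equiv.Perm H)) :=
      (orb_congr hcl_ab).trans (orb_insert_swap_of_rel hrel_ab)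
    have hale : cycleCount a ≤ orb (insert (Equiv.swap x (b x)) ({a} : Set (Equiv.Perm H))) + 1 := by
      rw [cycleCount_eq_orb]
      exact le_orb_insert_swap _ _ _
    have horbins : orb (insert (Equiv.swap x (b x)) ({a * Equiv.swap x (b x)} : Set (Equiv.Perm H)))
        = orb (insert (Equiv.swap x (b x)) ({a} : Set (Equiv.Perm H))) := orb_congr hcl_a
    by_cases hc : (orbSetoid ({a * Equiv.swap x (b x), Equiv.swap x (b x) * b} :
        Set (Equiv.Perm H))) x (b x)
    · have ht' : orb ({a * Equiv.swap x (b x), Equiv.swap x (b x) * b} : Set (Equiv.Perm H))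
          = orb ({a, b} : Set (Equiv.Perm H)) := by
        rw [← orb_insert_swap_of_rel hc, ht2]
      have ha' : orb (insert (Equiv.swap x (b x)) ({a * Equiv.swap x (b x)} : Set (Equiv.Perm H)))
          ≤ cycleCount (a * Equiv.swap x (b x)) := by
        rw [cycleCount_eq_orb]
        exact orb_insert_swap_le _ _ _
      rw [ht'] at hIH
      omega
    · have hnot_a' : ¬ (orbSetoid ({a * Equiv.swap x (b x)} : Set (Equiv.Perm H))) x (b x) := by
        rintro ⟨g, hg, he⟩
        exact hc ⟨g, Subgroup.closure_mono (by
          intro u hu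
          simp only [Set.mem_singleton_iff] at hu
          exact hu ▸ Set.mem_insert _ _) hg, he⟩
      have ht' : orb ({a * Equiv.swap x (b x), Equiv.swap x (b x) * b} : Set (Equiv.Perm H))
          = orb ({a, b} : Set (Equiv.Perm H)) + 1 := by
        rw [orb_insert_swap_of_not_rel hc, ht2]
      have ha' : cycleCount (a * Equiv.swap x (b x))
          = orb (insert (Equiv.swap x (b x)) ({a * Equiv.swap x (b x)} : Set (Equiv.Perm H))) + 1 := by
        rw [cycleCount_eq_orb]
        exact orb_insert_swap_of_not_rel hnot_a'
      have hpar := cycleCount_parity a b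
      rw [ht'] at hIH
      omega

end RibbonAux



/-- Euler formula for connected ribbon graphs: if `H` is a finite set of half-edges,
`α` a fixed-point-free involution (pairing half-edges into `E = |H|/2` edges), `σ` a
permutation (whose `V` cycles are the vertices) such that `⟨σ, α⟩` acts transitively on
`H`, and `F` is the number of cycles of `σ ∘ α` (the faces), then `V - E + F ≤ 2` and
`V - E + F` is even (indeed `V - E + F = 2 - 2g` with `g ≥ 0` the genus). -/
theorem ribbon_graph_euler_formula {H : Type*} [Fintype H] [DecidableEq H]
    (σ α : Equiv.Perm H)
    (hinv : α * α = 1) (hfpf : ∀ x, α x ≠ x)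
    (htrans : ∀ x y : H, ∃ g ∈ Subgroup.closure ({σ, α} : Set (Equiv.Perm H)), g x = y)
    (E : ℕ) (hE : 2 * E = Fintype.card H) :
    (cycleCount σ : ℤ) - E + cycleCount (σ * α) ≤ 2 ∧
      Even ((cycleCount σ : ℤ) - E + cycleCount (σ * α)) := by
  classical
  rcases isEmpty_or_nonempty H with hH | hH
  · have hn : Fintype.card H = 0 := Fintype.card_eq_zero
    have hE0 : E = 0 := by omega
    have hσ : cycleCount σ = 0 := by
      have := (RibbonAux.card_quotient_le (RibbonAux.orbSetoid ({σ} : Set (Equiv.Perm H))))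
      have h2 := RibbonAux.cycleCount_eq_orb σ
      rw [RibbonAux.orb] at h2
      omega
    have hσα : cycleCount (σ * α) = 0 := by
      have := (RibbonAux.card_quotient_le (RibbonAux.orbSetoid ({σ * α} : Set (Equiv.Perm H))))
      have h2 := RibbonAux.cycleCount_eq_orb (σ * α)
      rw [RibbonAux.orb] at h2
      omega
    rw [hσ, hσα, hE0]
    norm_num
  · have ht1 : RibbonAux.orb ({σ, α} : Set (Equiv.Perm H)) = 1 := by
      rw [RibbonAux.orb, Nat.card_eq_one_iff_unique]
      refine ⟨⟨fun q1 q2 => ?_⟩, ⟨Quotient.mk _ (Classical.arbitrary H)⟩⟩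
      induction q1 using Quotient.ind
      induction q2 using Quotient.ind
      rename_i z w
      exact Quotient.sound (htrans z w)
    have hkey := RibbonAux.key (Fintype.card H - cycleCount α) α σ rfl
    rw [ht1] at hkey
    have hsupp : α.support = Finset.univ := by
      ext z
      simp [Equiv.Perm.mem_support, hfpf z]
    have hfix0 : (Finset.univ.filter fun z => α z = z) = ∅ := by
      ext z
      simp [hfpf z]
    have h2 : ∀ r ∈ α.cycleType, r = 2 := by
      intro r hr
      have h2le := Equiv.Perm.two_le_of_mem_cycleType hr
      have hdvd : r ∣ 2 := by
        have hlcm : r ∣ orderOf α := by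
          rw [← Equiv.Perm.lcm_cycleType]
          exact Multiset.dvd_lcm hr
        exact hlcm.trans (orderOf_dvd_of_pow_eq_one (by rw [pow_two]; exact hinv))
      exact le_antisymm (Nat.le_of_dvd two_pos hdvd) h2le
    have hrepl : α.cycleType = Multiset.replicate (Multiset.card α.cycleType) 2 :=
      Multiset.eq_replicate.mpr ⟨rfl, h2⟩
    have hsum2 : α.cycleType.sum = (Multiset.card α.cycleType) * 2 := by
      conv_lhs => rw [hrepl]
      rw [Multiset.sum_replicate, smul_eq_mul]
    have hsum := Equiv.Perm.sum_cycleType α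
    have hsc : α.support.card = Fintype.card H := by rw [hsupp, Finset.card_univ]
    have hEα : cycleCount α = E := by
      rw [cycleCount, hfix0]
      simp only [Finset.card_empty, add_zero]
      omega
    have hpar := RibbonAux.cycleCount_parity σ α
    constructor
    · omega
    · rw [Int.even_iff]
      omega
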